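/- arXiv:2006.04348 — 3 statements merged into one kernel-verified Lean document; each statement's English description precedes it below -/
import Mathlib

section
/- Let u : ℝ × ℝ → ℝ be twice continuously differentiable with ∂u/∂β(0,0) ≠ 0, and suppose there are constants C₀ > 0 and δ₀ > 0 such that |u(τ, 0)| ≤ C₀·τ³ for all τ ∈ [0, δ₀]. Let β : [0, δ₀] → ℝ be continuous with β(0) = 0 and u(τ, β(τ)) = 0 for all τ ∈ [0, δ₀]. Then there exist C > 0 and δ ∈ (0, δ₀] such that |β(τ)| ≤ C·τ³ for all τ ∈ [0, δ]. -/
/-!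
Since `u` is `C¹`, it is strictly differentiable at the origin, so
`u(τ, β(τ)) - u(τ, 0) = ∂u/∂β(0,0) · β(τ) + o(β(τ))` as `τ → 0⁺`. The left side is `-u(τ, 0)`
and the derivative is nonzero, hence `β(τ) = O(u(τ, 0)) = O(τ³)`.
-/

open Matrix
open scoped RealInnerProductSpace ContDiff

noncomputable section

/-- Action of a real `m × n` matrix on a vector of `EuclideanSpace ℝ (Fin n)`,
viewed as a vector of `EuclideanSpace ℝ (Fin m)`. -/
def matVec {m n : ℕ} (M : Matrix (Fin m) (Fin n) ℝ) (x : EuclideanSpace ℝ (Fin n)) :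
    EuclideanSpace ℝ (Fin m) := WithLp.toLp 2 (M.mulVec x)

open Filter Topology Asymptotics

theorem HasFDerivAt.hasDerivAt_prodMk_right {𝕜 E F : Type*} [NontriviallyNormedField 𝕜]
    [NormedAddCommGroup E] [NormedSpace 𝕜 E] [NormedAddCommGroup F] [NormedSpace 𝕜 F]
    {f : E × 𝕜 → F} {f' : E × 𝕜 →L[𝕜] F} {x₀ : E} {y₀ : 𝕜} (hf : HasFDerivAt f f' (x₀, y₀)) :
    HasDerivAt (fun y => f (x₀, y)) (f' (0, 1)) y₀ :=
  hf.comp_hasDerivAt y₀ ((hasDerivAt_const y₀ x₀).prodMk (hasDerivAt_id y₀))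

theorem HasStrictFDerivAt.isBigO_sub_of_eventually_root {α 𝕜 E : Type*}
    [NontriviallyNormedField 𝕜] [NormedAddCommGroup E] [NormedSpace 𝕜 E]
    {f : E × 𝕜 → 𝕜} {f' : E × 𝕜 →L[𝕜] 𝕜} {x₀ : E} {y₀ : 𝕜}
    (hf : HasStrictFDerivAt f f' (x₀, y₀)) (hf' : f' (0, 1) ≠ 0)
    {l : Filter α} {a : α → E} {b : α → 𝕜} (ha : Tendsto a l (𝓝 x₀)) (hb : Tendsto b l (𝓝 y₀))
    (hroot : ∀ᶠ t in l, f (a t, b t) = 0) :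
    (fun t => b t - y₀) =O[l] fun t => f (a t, y₀) := by
  set c := f' (0, 1)
  have hpath : Tendsto (fun t => ((a t, b t), (a t, y₀))) l (𝓝 ((x₀, y₀), (x₀, y₀))) :=
    (ha.prodMk_nhds hb).prodMk_nhds (ha.prodMk_nhds tendsto_const_nhds)
  have hlin (s : 𝕜) : f' (0, s) = c * s := by
    simpa [mul_comm] using f'.map_smul s ((0 : E), (1 : 𝕜))
  have herr : (fun t => f (a t, b t) - f (a t, y₀) - c * (b t - y₀)) =o[l]
      fun t => b t - y₀ := by
    refine ((hf.isLittleO.comp_tendsto hpath).congr_left fun t => ?_).trans_isBigO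
      (isBigO_of_le l fun t => ?_)
    · rw [Function.comp_apply, Prod.mk_sub_mk, sub_self, hlin]
    · simp
  have hlinear_term : (fun t => c * (b t - y₀)) =O[l] fun t => -f (a t, y₀) := by
    refine (herr.trans_isBigO (isBigO_self_const_mul hf' _ l)).right_isBigO_add.congr'
      EventuallyEq.rfl ?_
    filter_upwards [hroot] with t ht
    rw [ht]; ring
  exact ((isBigO_self_const_mul hf' _ l).trans hlinear_term).of_neg_right

theorem Asymptotics.IsBigO.exists_bound_Icc {E F : Type*} [Norm E] [SeminormedAddCommGroup F]
    {f : ℝ → E} {g : ℝ → F} {a b : ℝ} (hab : a < b) (h : f =O[𝓝[Set.Icc a b] a] g) :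
    ∃ C > 0, ∃ δ, a < δ ∧ δ ≤ b ∧ ∀ x ∈ Set.Icc a δ, ‖f x‖ ≤ C * ‖g x‖ := by
  obtain ⟨C, hC, hCg⟩ := h.exists_pos
  rw [IsBigOWith_def, nhdsWithin_Icc_eq_nhdsGE hab] at hCg
  obtain ⟨u, hu, hsub⟩ := mem_nhdsGE_iff_exists_Icc_subset.1 hCg
  exact ⟨C, hC, min b u, lt_min hab hu, min_le_left _ _,
    fun x hx => hsub ⟨hx.1, hx.2.trans (min_le_right _ _)⟩⟩

theorem implicit_root_cubic_bound_general
    (u : ℝ × ℝ → ℝ) (hu : ContDiff ℝ 2 u)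
    (hpartial : deriv (fun b : ℝ => u (0, b)) 0 ≠ 0)
    (C₀ δ₀ : ℝ) (hδ₀ : 0 < δ₀)
    (hres : ∀ τ ∈ Set.Icc (0 : ℝ) δ₀, |u (τ, 0)| ≤ C₀ * τ ^ 3)
    (β : ℝ → ℝ) (hβcont : ContinuousOn β (Set.Icc 0 δ₀)) (hβ0 : β 0 = 0)
    (hβroot : ∀ τ ∈ Set.Icc (0 : ℝ) δ₀, u (τ, β τ) = 0) :
    ∃ C > (0 : ℝ), ∃ δ : ℝ, 0 < δ ∧ δ ≤ δ₀ ∧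
      ∀ τ ∈ Set.Icc (0 : ℝ) δ, |β τ| ≤ C * τ ^ 3 := by
  have hstrict := (hu.contDiffAt (x := (0, 0))).hasStrictFDerivAt (by norm_num)
  have hL : fderiv ℝ u (0, 0) (0, 1) ≠ 0 := by
    rwa [← hstrict.hasFDerivAt.hasDerivAt_prodMk_right.deriv]
  have hβ : Tendsto β (𝓝[Set.Icc 0 δ₀] 0) (𝓝 0) := by
    simpa [hβ0] using (hβcont 0 ⟨le_rfl, hδ₀.le⟩).tendsto
  have hβu : (fun τ => β τ - 0) =O[𝓝[Set.Icc 0 δ₀] 0] fun τ => u (τ, 0) :=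
    hstrict.isBigO_sub_of_eventually_root hL (tendsto_id.mono_left nhdsWithin_le_nhds) hβ
      (eventually_nhdsWithin_of_forall hβroot)
  have hucubic : (fun τ => u (τ, 0)) =O[𝓝[Set.Icc 0 δ₀] 0] fun τ => τ ^ 3 :=
    .of_bound C₀ <| eventually_nhdsWithin_of_forall fun τ hτ => by
      simpa [abs_of_nonneg hτ.1] using hres τ hτ
  obtain ⟨C, hC, δ, hδ, hδle, hbound⟩ := (hβu.trans hucubic).exists_bound_Icc hδ₀
  exact ⟨C, hC, δ, hδ, hδle, fun τ hτ => by simpa [abs_of_nonneg hτ.1] using hbound τ hτ⟩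

/-- abstract asymptotic lemma. If `u` is `C²` with
`∂u/∂β (0,0) ≠ 0`, `|u(τ,0)| ≤ C₀ τ³` on `[0, δ₀]`, and `β` is continuous with
`β 0 = 0` and `u(τ, β(τ)) = 0` on `[0, δ₀]`, then `|β(τ)| ≤ C τ³` near `0`. -/
theorem implicit_root_cubic_bound
    (u : ℝ × ℝ → ℝ) (hu : ContDiff ℝ 2 u)
    (hpartial : deriv (fun b : ℝ => u (0, b)) 0 ≠ 0)
    (C₀ δ₀ : ℝ) (hC₀ : 0 < C₀) (hδ₀ : 0 < δ₀)
    (hres : ∀ τ ∈ Set.Icc (0 : ℝ) δ₀, |u (τ, 0)| ≤ C₀ * τ ^ 3)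
    (β : ℝ → ℝ) (hβcont : ContinuousOn β (Set.Icc 0 δ₀)) (hβ0 : β 0 = 0)
    (hβroot : ∀ τ ∈ Set.Icc (0 : ℝ) δ₀, u (τ, β τ) = 0) :
    ∃ C > (0 : ℝ), ∃ δ : ℝ, 0 < δ ∧ δ ≤ δ₀ ∧
      ∀ τ ∈ Set.Icc (0 : ℝ) δ, |β τ| ≤ C * τ ^ 3 :=
  implicit_root_cubic_bound_general u hu hpartial C₀ δ₀ hδ₀ hres β hβcont hβ0 hβroot
end
end

section
/- There exist C > 0 and τ₀ > 0 such that for all τ ∈ [0, τ₀]: ‖Φ̃(τ) − Φ(t₀ + τ/2)‖ ≤ C·τ², i.e. the predictor Φ̃ is a second-order accurate approximation of the exact solution at the half step t₀ + τ/2. -/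
/-!
With `A(τ) = 1 + (τ/2) M L`, the predictor error `e(τ) = Φ̃(τ) - Φ(t₀ + τ/2)` satisfies
`A(τ) e(τ) = D(τ)` for the defect
`D(τ) = Φ(t₀) - Φ(t₀ + τ/2) - (τ/2) M (∇f(Φ̄(τ)) + L Φ(t₀ + τ/2))`.
`D` is smooth with `D(0) = 0`, and `D'(0) = 0` because `Φ̄(0) = Φ(t₀)` and `Φ` solves the
gradient flow at `t₀`, so `D = O(τ²)` by Taylor's theorem. As `A(τ)⁻¹ → 1`, also `e = O(τ²)`.
-/

open Matrix
open scoped RealInnerProductSpace ContDiff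

noncomputable section

variable (n : ℕ)
local notation "E" => EuclideanSpace ℝ (Fin n)

open Filter Topology Asymptotics
open scoped Nat Matrix.Norms.L2Operator

theorem ContDiff.gradient {F : Type*} [NormedAddCommGroup F] [InnerProductSpace ℝ F]
    [CompleteSpace F] {f : F → ℝ} {k m : WithTop ℕ∞} (hf : ContDiff ℝ k f) (hmk : m + 1 ≤ k) :
    ContDiff ℝ m (gradient f) :=
  (InnerProductSpace.toDual ℝ F).symm.toContinuousLinearEquiv.contDiff.comp
    (hf.fderiv_right hmk)

theorem isBigO_pow_of_iteratedDeriv_eq_zero {F : Type*} [NormedAddCommGroup F]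
    [NormedSpace ℝ F] {G : ℝ → F} {x₀ : ℝ} {m : ℕ} (hG : ContDiff ℝ m G)
    (hvanish : ∀ k < m, iteratedDeriv k G x₀ = 0) :
    G =O[𝓝 x₀] fun x ↦ (x - x₀) ^ m := by
  have htaylor : taylorWithinEval G m Set.univ x₀ =
      fun x ↦ ((m ! : ℝ)⁻¹ * (x - x₀) ^ m) • iteratedDeriv m G x₀ := by
    ext x
    rw [taylor_within_apply, Finset.sum_eq_single_of_mem m (by simp), iteratedDerivWithin_univ]
    intro k hk hkm
    rw [iteratedDerivWithin_univ, hvanish k (by grind), smul_zero]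
  have hpoly : taylorWithinEval G m Set.univ x₀ =O[𝓝 x₀] fun x ↦ (x - x₀) ^ m := by
    rw [htaylor]
    refine isBigO_of_le' _ (c := ‖(m ! : ℝ)⁻¹‖ * ‖iteratedDeriv m G x₀‖) fun x ↦ le_of_eq ?_
    rw [norm_smul, norm_mul]
    ring
  simpa using (taylor_isLittleO_univ hG).isBigO.add hpoly

theorem isBigO_sq_midpoint_defect {F : Type*} [NormedAddCommGroup F] [NormedSpace ℝ F]
    {Φ v : ℝ → F} {t₀ : ℝ} (hΦ : ContDiff ℝ 2 Φ) (hv : ContDiff ℝ 2 v)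
    (hΦ' : HasDerivAt Φ (-v 0) t₀) :
    (fun τ ↦ Φ t₀ - Φ (t₀ + τ / 2) - (τ / 2) • v τ) =O[𝓝 0] fun τ ↦ τ ^ 2 := by
  have hhalf : HasDerivAt (fun τ : ℝ ↦ τ / 2) (1 / 2) 0 := (hasDerivAt_id 0).div_const 2
  have hΦhalf : HasDerivAt (fun τ ↦ Φ (t₀ + τ / 2)) ((1 / 2 : ℝ) • -v 0) 0 :=
    HasDerivAt.scomp (0 : ℝ) (by simpa using hΦ') (hhalf.const_add t₀)
  have hderiv : HasDerivAt (fun τ ↦ Φ t₀ - Φ (t₀ + τ / 2) - (τ / 2) • v τ) 0 0 := by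
    refine (((hasDerivAt_const (0 : ℝ) (Φ t₀)).sub hΦhalf).sub
      (hhalf.smul ((hv.differentiable (by simp)) 0).hasDerivAt)).congr_deriv ?_
    simp
  have hD : ContDiff ℝ 2 (fun τ ↦ Φ t₀ - Φ (t₀ + τ / 2) - (τ / 2) • v τ) := by fun_prop
  simpa using isBigO_pow_of_iteratedDeriv_eq_zero (x₀ := 0) hD fun k hk ↦ by
    interval_cases k
    · simp
    · simpa using hderiv.deriv

section MatrixInverse

variable {ι 𝕜 α : Type*} [Fintype ι] [DecidableEq ι] [NormedField 𝕜] {l : Filter α}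
  {A : α → Matrix ι ι 𝕜}

theorem Matrix.eventually_isUnit_det_of_tendsto_one (hA : Tendsto A l (𝓝 1)) :
    ∀ᶠ x in l, IsUnit (A x).det :=
  (((continuous_id.matrix_det.tendsto 1).comp hA).eventually_ne (by simp)).mono
    fun _ ↦ isUnit_iff_ne_zero.mpr

theorem Matrix.tendsto_inv_of_tendsto_one (hA : Tendsto A l (𝓝 1)) :
    Tendsto (fun x ↦ (A x)⁻¹) l (𝓝 1) := by
  have hinv : ContinuousAt Ring.inverse (1 : Matrix ι ι 𝕜).det := by
    simpa [Ring.inverse_eq_inv'] using continuousAt_inv₀ (one_ne_zero (α := 𝕜))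
  simpa [Function.comp_def] using (continuousAt_matrix_inv 1 hinv).tendsto.comp hA

end MatrixInverse

section MatVec

variable {m k : ℕ}

theorem matVec_add (A : Matrix (Fin m) (Fin k) ℝ) (x y : EuclideanSpace ℝ (Fin k)) :
    matVec A (x + y) = matVec A x + matVec A y := by
  simp [matVec, mulVec_add]

theorem matVec_matVec (A : Matrix (Fin m) (Fin k) ℝ) (B : Matrix (Fin k) (Fin k) ℝ)
    (x : EuclideanSpace ℝ (Fin k)) : matVec A (matVec B x) = matVec (A * B) x := by
  simp [matVec, mulVec_mulVec]

theorem matVec_one_add_smul (B : Matrix (Fin k) (Fin k) ℝ) (c : ℝ)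
    (x : EuclideanSpace ℝ (Fin k)) : matVec (1 + c • B) x = x + c • matVec B x := by
  simp [matVec, add_mulVec, smul_mulVec]

theorem matVec_nonsing_inv_sub {A : Matrix (Fin k) (Fin k) ℝ} (hA : IsUnit A.det)
    (b y : EuclideanSpace ℝ (Fin k)) : matVec A⁻¹ b - y = matVec A⁻¹ (b - matVec A y) := by
  simp [matVec, mulVec_sub, mulVec_mulVec, nonsing_inv_mul _ hA]

theorem norm_matVec_le (A : Matrix (Fin m) (Fin k) ℝ) (x : EuclideanSpace ℝ (Fin k)) :
    ‖matVec A x‖ ≤ ‖A‖ * ‖x‖ :=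
  A.l2_opNorm_mulVec x

theorem contDiff_matVec {r : WithTop ℕ∞} (A : Matrix (Fin m) (Fin k) ℝ) :
    ContDiff ℝ r (matVec A) :=
  (LinearMap.toContinuousLinearMap (toEuclideanLin A)).contDiff

theorem Asymptotics.IsBigO.matVec {α : Type*} {l : Filter α} {A : α → Matrix (Fin m) (Fin k) ℝ}
    {x : α → EuclideanSpace ℝ (Fin k)} {g : α → ℝ} (hA : A =O[l] fun _ ↦ (1 : ℝ))
    (hx : x =O[l] g) : (fun a ↦ matVec (A a) (x a)) =O[l] g := by
  have hprod : (fun a ↦ ‖A a‖ * ‖x a‖) =O[l] fun a ↦ 1 * g a := hA.norm_left.mul hx.norm_left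
  simpa using (IsBigO.of_bound' (Eventually.of_forall fun a ↦
    (norm_matVec_le (A a) (x a)).trans (le_abs_self _))).trans hprod

end MatVec

theorem exists_pos_bound_Icc_of_isBigO {F : Type*} [Norm F] {f : ℝ → F} {g : ℝ → ℝ}
    (h : f =O[𝓝 0] g) : ∃ C > 0, ∃ τ₀ > 0, ∀ τ ∈ Set.Icc 0 τ₀, ‖f τ‖ ≤ C * ‖g τ‖ := by
  obtain ⟨C, hC, hfg⟩ := h.exists_pos
  obtain ⟨ε, hε, hball⟩ := Metric.eventually_nhds_iff.mp hfg.bound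
  refine ⟨C, hC, ε / 2, half_pos hε, fun τ hτ ↦ hball ?_⟩
  rw [Real.dist_0_eq_abs, abs_of_nonneg hτ.1]
  linarith [hτ.2]

theorem svm_predictor_half_step_second_order
    (M L : Matrix (Fin n) (Fin n) ℝ)
    (f : E → ℝ) (hf : ContDiff ℝ ∞ f)
    (Φ : ℝ → E) (hΦ : ContDiff ℝ ∞ Φ)
    (hODE : ∀ t : ℝ, HasDerivAt Φ (-matVec M (matVec L (Φ t) + gradient f (Φ t))) t)
    (t₀ : ℝ)
    (Φbar : ℝ → E)
    (hΦbar : ∀ τ : ℝ, Φbar τ = (3 / 2 : ℝ) • Φ t₀ - (1 / 2 : ℝ) • Φ (t₀ - τ))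
    (Φtilde : ℝ → E)
    (hΦtilde : ∀ τ : ℝ, Φtilde τ =
      matVec ((1 + (τ / 2) • (M * L))⁻¹) (Φ t₀ - (τ / 2) • matVec M (gradient f (Φbar τ)))) :
    ∃ C > (0 : ℝ), ∃ τ₀ > (0 : ℝ), ∀ τ ∈ Set.Icc (0 : ℝ) τ₀,
      ‖Φtilde τ - Φ (t₀ + τ / 2)‖ ≤ C * τ ^ 2 := by
  set v : ℝ → E := fun τ ↦ matVec M (gradient f (Φbar τ) + matVec L (Φ (t₀ + τ / 2)))
  have hΦbar_smooth : ContDiff ℝ ∞ Φbar := by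
    rw [funext hΦbar]
    fun_prop
  have hv : ContDiff ℝ ∞ v :=
    (contDiff_matVec M).comp (((hf.gradient le_rfl).comp hΦbar_smooth).add
      ((contDiff_matVec L).comp (hΦ.comp (contDiff_const.add (contDiff_id.div_const 2)))))
  have hv0 : HasDerivAt Φ (-v 0) t₀ := by
    have hΦbar0 : Φbar 0 = Φ t₀ := by rw [hΦbar, sub_zero, ← sub_smul]; norm_num
    simpa [v, hΦbar0, add_comm] using hODE t₀
  have hdefect := isBigO_sq_midpoint_defect (contDiff_infty.mp hΦ 2) (contDiff_infty.mp hv 2) hv0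
  have hA : Tendsto (fun τ : ℝ ↦ 1 + (τ / 2) • (M * L)) (𝓝 0) (𝓝 1) :=
    (by fun_prop : Continuous fun τ : ℝ ↦ 1 + (τ / 2) • (M * L)).tendsto' 0 1 (by simp)
  have herror : ∀ᶠ τ in 𝓝 0, matVec (1 + (τ / 2) • (M * L))⁻¹
      (Φ t₀ - Φ (t₀ + τ / 2) - (τ / 2) • v τ) = Φtilde τ - Φ (t₀ + τ / 2) := by
    filter_upwards [eventually_isUnit_det_of_tendsto_one hA] with τ hτ
    rw [hΦtilde, matVec_nonsing_inv_sub hτ, matVec_one_add_smul, ← matVec_matVec]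
    simp only [v, matVec_add]
    congr 1
    module
  obtain ⟨C, hC, τ₀, hτ₀, hbound⟩ := exists_pos_bound_Icc_of_isBigO <|
    (((tendsto_inv_of_tendsto_one hA).isBigO_one ℝ).matVec hdefect).congr' herror
      EventuallyEq.rfl
  exact ⟨C, hC, τ₀, hτ₀, fun τ hτ ↦ by simpa using hbound τ hτ⟩
end
end

section
/- Suppose the supplementary direction has the form g(Φ) = M·h(Φ) for some map h : ℝⁿ → ℝⁿ (as in both choices g[Φ] = M∇f(Φ) and g[Φ] = −M(LΦ + ∇f(Φ))), and let e ∈ ℝⁿ satisfy M·e = 0. Then for every τ ≥ 0 and every β ∈ ℝ, the SVM update Φⁿ⁺¹ = Φ̂(τ) + β·w(τ) satisfies ⟨e, Φⁿ⁺¹⟩ = ⟨e, Φⁿ⟩; that is, the scheme exactly conserves every linear invariant associated with the kernel of M (e.g. the total volume). -/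
open Matrix
open scoped RealInnerProductSpace ContDiff

noncomputable section

variable (n : ℕ)
local notation "E" => EuclideanSpace ℝ (Fin n)

/-! A vector `e` with `Mᵀe = 0` is a left fixed vector of `I ± (τ/2)ML`, hence of
`(I + (τ/2)ML)⁻¹`, which exists since `M ⪰ 0`, `L ≻ 0` and `τ ≥ 0`. Every other term of the
update lies in the range of `M`, which `e` annihilates; so `⟪e, ·⟫` sees only `Φⁿ`. -/

namespace Matrix

variable {ι : Type*} [Fintype ι] [DecidableEq ι]

theorem isUnit_one_add_smul_mul {M L : Matrix ι ι ℝ} (hM : ∀ x, 0 ≤ x ⬝ᵥ M *ᵥ x)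
    (hL : ∀ x, x ≠ 0 → 0 < x ⬝ᵥ L *ᵥ x) {c : ℝ} (hc : 0 ≤ c) : IsUnit (1 + c • (M * L)) := by
  rw [isUnit_iff_isUnit_det, isUnit_iff_ne_zero, ne_eq, ← exists_mulVec_eq_zero_iff]
  rintro ⟨z, hz_ne, hz⟩
  rw [add_mulVec, one_mulVec, smul_mulVec, ← mulVec_mulVec] at hz
  -- pair `z + c • M (L z) = 0` with `L z`
  have hzero : z ⬝ᵥ L *ᵥ z + c * ((L *ᵥ z) ⬝ᵥ M *ᵥ (L *ᵥ z)) = 0 := by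
    simpa [dotProduct_add, dotProduct_smul, dotProduct_comm z] using congrArg (L *ᵥ z ⬝ᵥ ·) hz
  nlinarith [hL z hz_ne, hM (L *ᵥ z)]

theorem vecMul_one_add_smul_mul_of_vecMul_eq_zero {e : ι → ℝ} {M : Matrix ι ι ℝ}
    (he : e ᵥ* M = 0) (c : ℝ) (K : Matrix ι ι ℝ) : e ᵥ* (1 + c • (M * K)) = e := by
  rw [vecMul_add, vecMul_one, ← mul_smul_comm, ← vecMul_vecMul, he, zero_vecMul, add_zero]

theorem vecMul_one_sub_smul_mul_of_vecMul_eq_zero {e : ι → ℝ} {M : Matrix ι ι ℝ}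
    (he : e ᵥ* M = 0) (c : ℝ) (K : Matrix ι ι ℝ) : e ᵥ* (1 - c • (M * K)) = e := by
  rw [sub_eq_add_neg, ← neg_smul, vecMul_one_add_smul_mul_of_vecMul_eq_zero he]

theorem vecMul_inv_eq_self {e : ι → ℝ} {A : Matrix ι ι ℝ} (hA : IsUnit A)
    (he : e ᵥ* A = e) : e ᵥ* A⁻¹ = e :=
  calc e ᵥ* A⁻¹ = (e ᵥ* A) ᵥ* A⁻¹ := by rw [he]
    _ = e := by rw [vecMul_vecMul, mul_nonsing_inv _ ((isUnit_iff_isUnit_det A).mp hA), vecMul_one]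

end Matrix

section

variable {n}

theorem inner_toLp_matVec_toLp {m : ℕ} (A : Matrix (Fin m) (Fin n) ℝ) (x : Fin m → ℝ)
    (y : Fin n → ℝ) :
    ⟪WithLp.toLp 2 x, matVec A (WithLp.toLp 2 y)⟫ = x ⬝ᵥ A *ᵥ y := by
  rw [matVec, WithLp.ofLp_toLp, EuclideanSpace.inner_toLp_toLp, star_trivial, dotProduct_comm]

theorem inner_matVec_right {m : ℕ} (A : Matrix (Fin m) (Fin n) ℝ)
    (x : EuclideanSpace ℝ (Fin m)) (y : E) :
    ⟪x, matVec A y⟫ = ⟪WithLp.toLp 2 (x.ofLp ᵥ* A), y⟫ := by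
  simp only [EuclideanSpace.inner_eq_star_dotProduct, star_trivial, matVec]
  rw [dotProduct_comm, dotProduct_mulVec, dotProduct_comm]

theorem inner_matVec_right_of_vecMul_eq_self {A : Matrix (Fin n) (Fin n) ℝ} {x : E}
    (hx : x.ofLp ᵥ* A = x.ofLp) (y : E) : ⟪x, matVec A y⟫ = ⟪x, y⟫ := by
  rw [inner_matVec_right, hx, WithLp.toLp_ofLp]

theorem inner_matVec_right_of_vecMul_eq_zero {m : ℕ} {A : Matrix (Fin m) (Fin n) ℝ}
    {x : EuclideanSpace ℝ (Fin m)}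
    (hx : x.ofLp ᵥ* A = 0) (y : E) : ⟪x, matVec A y⟫ = 0 := by
  rw [inner_matVec_right, hx, WithLp.toLp_zero, inner_zero_left]

end

theorem svm_conserves_linear_invariants
    (M L : Matrix (Fin n) (Fin n) ℝ)
    (hMsymm : M.IsSymm)
    (hMpsd : ∀ x : E, 0 ≤ ⟪x, matVec M x⟫)
    (hLpd : ∀ x : E, x ≠ 0 → 0 < ⟪x, matVec L x⟫)
    (f : E → ℝ)
    (g : E → E)
    (Φn : E)
    (Φtilde : ℝ → E)
    (Φhat : ℝ → E)
    (hΦhat : ∀ τ : ℝ, Φhat τ = matVec ((1 + (τ / 2) • (M * L))⁻¹)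
      (matVec (1 - (τ / 2) • (M * L)) Φn - τ • matVec M (gradient f (Φtilde τ))))
    (w : ℝ → E)
    (hw : ∀ τ : ℝ, w τ = matVec ((1 + (τ / 2) • (M * L))⁻¹) (g (Φtilde τ)))
    (h : E → E) (hgh : ∀ Φ0 : E, g Φ0 = matVec M (h Φ0))
    (e : E) (he : matVec M e = 0) :
    ∀ τ : ℝ, 0 ≤ τ → ∀ β : ℝ, ⟪e, Φhat τ + β • w τ⟫ = ⟪e, Φn⟫ := by
  intro τ hτ β
  have hA : IsUnit (1 + (τ / 2) • (M * L)) :=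
    isUnit_one_add_smul_mul (fun x ↦ inner_toLp_matVec_toLp M x x ▸ hMpsd (WithLp.toLp 2 x))
      (fun x hx ↦ inner_toLp_matVec_toLp L x x ▸ hLpd (WithLp.toLp 2 x) (by simpa using hx))
      (by positivity)
  have heM : e.ofLp ᵥ* M = 0 := by
    rw [← mulVec_transpose, hMsymm.eq]
    exact congrArg WithLp.ofLp he
  have heA := vecMul_inv_eq_self hA (vecMul_one_add_smul_mul_of_vecMul_eq_zero heM _ L)
  rw [inner_add_right, inner_smul_right, hΦhat, hw, hgh,
    inner_matVec_right_of_vecMul_eq_self heA, inner_matVec_right_of_vecMul_eq_self heA,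
    inner_sub_right, inner_smul_right,
    inner_matVec_right_of_vecMul_eq_self (vecMul_one_sub_smul_mul_of_vecMul_eq_zero heM _ L),
    inner_matVec_right_of_vecMul_eq_zero heM, inner_matVec_right_of_vecMul_eq_zero heM]
  ring
end
end
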